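/- arXiv:2305.07212 — 3 statements merged into one kernel-verified Lean document; each statement's English description precedes it below -/
import Mathlib

section
/- (Proposition 1, Laplace perturbation mechanism satisfies ε-differential privacy.) Let Δ > 0 and ε > 0, and set b = Δ/ε. Then for all x, x' ∈ ℝ with |x − x'| ≤ Δ and every measurable set E ⊆ ℝ, one has Lap(x, b)(E) ≤ exp(ε) · Lap(x', b)(E). -/
open MeasureTheory

/-- The Laplace measure on `ℝ` with location `μ` and scale `b`, defined as the measure
with density `x ↦ (1/(2b)) * exp (-|x - μ|/b)` with respect to Lebesgue measure. -/
noncomputable def lap (μ b : ℝ) : Measure ℝ :=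
  volume.withDensity fun x => ENNReal.ofReal ((1 / (2 * b)) * Real.exp (-|x - μ| / b))

/-- **Proposition 1 (Laplace perturbation mechanism satisfies ε-differential privacy).**
Let `Δ > 0`, `ε > 0` and set `b = Δ/ε`.  For all `x x' : ℝ` with `|x - x'| ≤ Δ` and every
measurable set `E ⊆ ℝ`, one has `Lap(x, b)(E) ≤ exp ε * Lap(x', b)(E)`. -/
theorem laplace_mechanism_dp (Δ ε : ℝ) (hΔ : 0 < Δ) (hε : 0 < ε) (b : ℝ) (hb : b = Δ / ε)
    (x x' : ℝ) (hxx' : |x - x'| ≤ Δ) (E : Set ℝ) (hE : MeasurableSet E) :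
    lap x b E ≤ ENNReal.ofReal (Real.exp ε) * lap x' b E := by
  have hbpos : 0 < b := by rw [hb]; positivity
  rw [lap, lap, withDensity_apply _ hE, withDensity_apply _ hE, ← lintegral_const_mul']
  · refine setLIntegral_mono' hE fun y _ => ?_
    rw [← ENNReal.ofReal_mul (Real.exp_pos ε).le]
    apply ENNReal.ofReal_le_ofReal
    rw [show Real.exp ε * (1 / (2 * b) * Real.exp (-|y - x'| / b))
        = 1 / (2 * b) * (Real.exp ε * Real.exp (-|y - x'| / b)) by ring,
      ← Real.exp_add]
    refine mul_le_mul_of_nonneg_left (Real.exp_le_exp.2 ?_) (by positivity)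
    have h1 : |y - x| ≥ |y - x'| - Δ := by
      have := abs_sub_abs_le_abs_sub (y - x') (y - x)
      have h2 : |y - x' - (y - x)| = |x - x'| := by rw [show y - x' - (y - x) = x - x' by ring]
      linarith [this, h2 ▸ this, hxx']
    have hΔ' : Δ = ε * b := by rw [hb]; field_simp
    rw [show ε + -|y - x'| / b = (ε * b + -|y - x'|) / b by field_simp]
    gcongr
    linarith
  · exact ENNReal.ofReal_ne_top
end

section
/- (Beta mixing identity.) For every integer N ≥ 2 and every real c ≥ 0, ∫₀¹ (N − 1)·(1 − u)^{N−2} · (1 + c·u)^{−N} du = 1/(1 + c). -/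
/-- **Beta mixing identity.**
For every integer `N ≥ 2` and every real `c ≥ 0`,
`∫₀¹ (N - 1) * (1 - u)^(N-2) * (1 + c u)⁻ᴺ du = 1 / (1 + c)`. -/
theorem beta_mixing_identity (N : ℕ) (hN : 2 ≤ N) (c : ℝ) (hc : 0 ≤ c) :
    ∫ u in (0 : ℝ)..1, ((N : ℝ) - 1) * (1 - u) ^ (N - 2) * (1 + c * u) ^ (-(N : ℤ)) =
      1 / (1 + c) := by
  have hclt : (0:ℝ) < 1 + c := by linarith
  set F : ℝ → ℝ := fun u => -((1 - u) ^ (N - 1) * (1 + c * u) ^ (1 - (N : ℤ))) / (1 + c)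
    with hF
  have hbase : ∀ u ∈ Set.uIcc (0:ℝ) 1, (0:ℝ) < 1 + c * u := by
    intro u hu
    rw [Set.uIcc_of_le (by norm_num)] at hu
    nlinarith [hu.1, hu.2]
  have hderiv : ∀ u ∈ Set.uIcc (0:ℝ) 1,
      HasDerivAt F (((N : ℝ) - 1) * (1 - u) ^ (N - 2) * (1 + c * u) ^ (-(N : ℤ))) u := by
    intro u hu
    have hb := hbase u hu
    have hb' : 1 + c * u ≠ 0 := ne_of_gt hb
    have hg : HasDerivAt (fun u : ℝ => (1 - u) ^ (N - 1))
        (((N:ℝ) - 1) * (1 - u) ^ (N - 2) * (-1)) u := by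
      have h1 : HasDerivAt (fun u : ℝ => 1 - u) (-1) u := (hasDerivAt_id u).const_sub 1
      have := h1.pow (N - 1)
      refine this.congr_deriv ?_
      have : ((N - 1 : ℕ) : ℝ) = (N : ℝ) - 1 := by
        have : (1:ℕ) ≤ N := by omega
        push_cast [Nat.cast_sub this]; ring
      rw [this, show N - 1 - 1 = N - 2 from by omega]
    have hh : HasDerivAt (fun u : ℝ => (1 + c * u) ^ (1 - (N : ℤ)))
        (((1 - (N : ℤ)) : ℝ) * (1 + c * u) ^ (1 - (N : ℤ) - 1) * c) u := by
      have h1 : HasDerivAt (fun u : ℝ => 1 + c * u) c u := by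
        simpa using ((hasDerivAt_id u).const_mul c).const_add 1
      have := (hasDerivAt_zpow (1 - (N:ℤ)) (1 + c * u) (Or.inl hb')).comp u h1
      refine this.congr_deriv ?_
      push_cast
      ring
    have hmul := (hg.mul hh).neg.div_const (1 + c)
    refine hmul.congr_deriv ?_
    have e1 : (1 : ℤ) - (N : ℤ) - 1 = -(N : ℤ) := by ring
    have e2 : (1 + c * u) ^ ((1:ℤ) - (N : ℤ)) = (1 + c * u) * (1 + c * u) ^ (-(N:ℤ)) := by
      rw [show (1:ℤ) - (N:ℤ) = 1 + -(N:ℤ) by ring, zpow_add₀ hb', zpow_one]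
    have e3 : (1 - u) ^ (N - 1) = (1 - u) * (1 - u) ^ (N - 2) := by
      rw [show N - 1 = (N - 2) + 1 by omega, pow_succ]; ring
    rw [e1, e2, e3]
    push_cast
    field_simp
    ring
  have hcont : IntervalIntegrable
      (fun u => ((N : ℝ) - 1) * (1 - u) ^ (N - 2) * (1 + c * u) ^ (-(N : ℤ)))
      MeasureTheory.volume 0 1 := by
    apply ContinuousOn.intervalIntegrable
    apply ContinuousOn.mul
    · exact (continuousOn_const.mul ((continuousOn_const.sub continuousOn_id).pow _))
    · exact ContinuousOn.zpow₀ (continuousOn_const.add (continuousOn_const.mul continuousOn_id))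
        _ (fun u hu => Or.inl (ne_of_gt (hbase u hu)))
  rw [intervalIntegral.integral_eq_sub_of_hasDerivAt hderiv hcont]
  have h10 : (1:ℝ) - 1 = 0 := by norm_num
  simp only [hF]
  rw [show ((1:ℝ) - 1) = 0 by norm_num]
  rw [zero_pow (by omega : N - 1 ≠ 0)]
  simp
  field_simp
end

section
/- (Additive secret sharing withstands collusion of N − 1 parties.) Let p be a positive integer and N ≥ 2. Fix a secret x ∈ ZMod p. Consider the random tuple (s₁, …, s_N) ∈ (ZMod p)^N obtained by sampling s₁, …, s_{N−1} independently and uniformly from ZMod p and setting s_N = x − (s₁ + ⋯ + s_{N−1}). Then for every index i ∈ {1, …, N}, the joint distribution of the remaining N − 1 shares (s_j)_{j ≠ i} is the uniform distribution on (ZMod p)^{N−1}; in particular it does not depend on x. -/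
lemma map_uniform_equiv {α : Type*} [Fintype α] [Nonempty α] (e : α ≃ α) :
    PMF.map e (PMF.uniformOfFintype α) = PMF.uniformOfFintype α := by
  ext g
  classical
  rw [PMF.map_apply, tsum_eq_single (e.symm g)]
  · simp
  · intro b hb
    rw [if_neg]
    intro h
    exact hb (by simp [h])


/-- **Additive secret sharing withstands collusion of `N - 1` parties.**
Let `p` be a positive integer and `N = n + 1 ≥ 2` (i.e. `n ≥ 1`).  Fix a secret
`x : ZMod p`.  Sample the first `n = N - 1` shares `s₁, …, s_{N-1}` independently and
uniformly from `ZMod p` and set the last share `s_N = x - (s₁ + ⋯ + s_{N-1})`, obtaining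
a random tuple `s ∈ (ZMod p)^N` (here `Fin.snoc f (x - ∑ k, f k)`).  Then for every
index `i`, the joint distribution of the remaining `N - 1` shares `(s_j)_{j ≠ i}`
(obtained via `Fin.succAbove i`) is the uniform distribution on `(ZMod p)^{N-1}`;
in particular it does not depend on `x`. -/
theorem additive_secret_sharing_secure (p : ℕ) [NeZero p] (n : ℕ) (hn : 1 ≤ n)
    (x : ZMod p) (i : Fin (n + 1)) :
    PMF.map
        (fun f : Fin n → ZMod p => fun j : Fin n =>
          (Fin.snoc f (x - ∑ k, f k) : Fin (n + 1) → ZMod p) (i.succAbove j))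
        (PMF.uniformOfFintype (Fin n → ZMod p)) =
      PMF.uniformOfFintype (Fin n → ZMod p) := by
  set F : (Fin n → ZMod p) → (Fin n → ZMod p) := fun f j =>
    (Fin.snoc f (x - ∑ k, f k) : Fin (n + 1) → ZMod p) (i.succAbove j) with hF
  have hsurj : Function.Surjective F := by
    intro g
    set t : Fin (n + 1) → ZMod p := Fin.insertNth i (x - ∑ k, g k) g with ht
    refine ⟨Fin.init t, ?_⟩
    have hsum : ∑ a, t a = x := by
      rw [Fin.sum_univ_succAbove t i]
      simp [ht]
    have hlast : t (Fin.last n) = x - ∑ k, Fin.init t k := by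
      have h2 := Fin.sum_univ_castSucc t
      rw [hsum] at h2
      simp only [Fin.init] at *
      rw [eq_sub_iff_add_eq, add_comm]
      exact h2.symm
    funext j
    show (Fin.snoc (Fin.init t) (x - ∑ k, Fin.init t k) : Fin (n+1) → ZMod p) (i.succAbove j) = g j
    rw [← hlast, Fin.snoc_init_self]
    simp [ht]
  have hbij : Function.Bijective F := (Finite.surjective_iff_bijective).1 hsurj
  exact (congrArg (fun φ => PMF.map φ (PMF.uniformOfFintype (Fin n → ZMod p))) rfl).trans
    (map_uniform_equiv (Equiv.ofBijective F hbij))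
end
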